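/- Let Σ1, Σ2 be symmetric positive semidefinite d×d matrices. Then trace((Σ1^{1/2} Σ2 Σ1^{1/2})^{1/2}) ≤ (1/4)·‖Σ1^{1/2} + Σ2^{1/2}‖_F², where ‖·‖_F is the Frobenius norm. Equivalently, the sum of singular values of Σ1^{1/2} Σ2^{1/2} is bounded by (1/4)·trace((Σ1^{1/2}+Σ2^{1/2})²). -/

import Mathlib

open MeasureTheory Matrix

/- The positive semidefinite square root of a positive semidefinite matrix
(`Matrix.PosSemidef.sqrt`, removed from Mathlib; restored with its old definition). -/
open scoped ComplexOrder in
noncomputable def Matrix.PosSemidef.sqrt {n 𝕜 : Type*} [Fintype n] [DecidableEq n] [RCLike 𝕜]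
    {A : Matrix n n 𝕜} (hA : A.PosSemidef) : Matrix n n 𝕜 :=
  hA.1.eigenvectorUnitary.1 * diagonal (fun i => ((hA.1.eigenvalues i).sqrt : 𝕜)) *
    (star hA.1.eigenvectorUnitary : Matrix n n 𝕜)

noncomputable def frob {d : ℕ} (M : Matrix (Fin d) (Fin d) ℝ) : ℝ :=
  Real.sqrt (∑ i, ∑ j, M i j ^ 2)

/-!
Write `A = Σ₁^{1/2}`, `B = Σ₂^{1/2}` and `C = B A`, so that the matrix under the outer square
root is `Cᴴ C` and its square root `R` satisfies `R = Pᴴ C` for the partial isometry `P` of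
the polar decomposition of `C`. For any contraction `P`,
`2 tr (Pᴴ B A) ≤ tr (A B) + tr (Pᴴ B P A)` because `tr ((1 - P)ᴴ B (1 - P) A) ≥ 0`, and
`2 tr (Pᴴ B P A) ≤ tr (P Pᴴ B²) + tr (Pᴴ P A²) ≤ tr B² + tr A²` because `‖B P - P A‖² ≥ 0`.
Together, `tr R ≤ (tr A² + 2 tr (A B) + tr B²) / 4 = ‖A + B‖²_F / 4`.
-/

open scoped MatrixOrder ComplexOrder

namespace Matrix

section RCLike

variable {m n 𝕜 : Type*} [Fintype m] [Fintype n] [DecidableEq n] [RCLike 𝕜]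

lemma PosSemidef.sqrt_eq_cfcSqrt {A : Matrix n n 𝕜} (hA : A.PosSemidef) :
    hA.sqrt = CFC.sqrt A := by
  rw [CFC.sqrt_eq_real_sqrt A hA.nonneg, cfcₙ_eq_cfc, hA.1.cfc_eq]
  rfl

lemma PosSemidef.posSemidef_sqrt {A : Matrix n n 𝕜} (hA : A.PosSemidef) : hA.sqrt.PosSemidef :=
  hA.sqrt_eq_cfcSqrt ▸ nonneg_iff_posSemidef.mp (CFC.sqrt_nonneg A)

lemma PosSemidef.sqrt_mul_self {A : Matrix n n 𝕜} (hA : A.PosSemidef) : hA.sqrt * hA.sqrt = A :=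
  hA.sqrt_eq_cfcSqrt ▸ CFC.sqrt_mul_sqrt_self A hA.nonneg

lemma PosSemidef.trace_mul_nonneg {X Y : Matrix n n 𝕜} (hX : X.PosSemidef) (hY : Y.PosSemidef) :
    0 ≤ trace (X * Y) := by
  have hS : (CFC.sqrt X)ᴴ = CFC.sqrt X := (CFC.sqrt_nonneg X).isSelfAdjoint.star_eq
  have hXS : CFC.sqrt X * CFC.sqrt X = X := CFC.sqrt_mul_sqrt_self X hX.nonneg
  rw [← hXS, Matrix.mul_assoc, trace_mul_comm, Matrix.mul_assoc]
  simpa [hS, Matrix.mul_assoc] using (hY.conjTranspose_mul_mul_same (CFC.sqrt X)).trace_nonneg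

lemma cfc_mul_cfc (f g : ℝ → ℝ) (R : Matrix n n 𝕜) :
    cfc f R * cfc g R = cfc (fun x => f x * g x) R :=
  (cfc_mul f g R (finite_real_spectrum.continuousOn f) (finite_real_spectrum.continuousOn g)).symm

lemma isStarProjection_cfc {e : ℝ → ℝ} (he : ∀ x, e x * e x = e x) (R : Matrix n n 𝕜) :
    IsStarProjection (cfc e R) :=
  ⟨by rw [IsIdempotentElem, cfc_mul_cfc]; simp only [he], cfc_predicate e R⟩

/-- The witness is `P = C R⁺`, where `R⁺ = cfc (·⁻¹) R` is the Moore–Penrose inverse of `R`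
thanks to `0⁻¹ = 0`. -/
lemma exists_isStarProjection_conjTranspose_mul_eq {C : Matrix m n 𝕜} {R : Matrix n n 𝕜}
    (hR : R.IsHermitian) (hRC : R * R = Cᴴ * C) :
    ∃ P : Matrix m n 𝕜, IsStarProjection (Pᴴ * P) ∧ IsStarProjection (P * Pᴴ) ∧ Pᴴ * C = R := by
  have hR' : IsSelfAdjoint R := hR
  have hid : cfc (fun x : ℝ => x) R = R := cfc_id' ℝ R
  obtain ⟨Q, hQ, hQRR, hRQ, hQRQ⟩ : ∃ Q : Matrix n n 𝕜, Qᴴ = Q ∧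
      Q * (R * R) = R ∧ R * Q = cfc (fun x : ℝ => x * x⁻¹) R ∧ Q * (R * Q) = Q := by
    refine ⟨cfc (fun x : ℝ => x⁻¹) R, (cfc_predicate _ R : IsSelfAdjoint _).star_eq, ?_, ?_, ?_⟩
    · nth_rw 2 [← hid]; nth_rw 3 [← hid]; nth_rw 4 [← hid]
      simp only [cfc_mul_cfc]
      congr 1; funext x; rw [← mul_assoc, inv_mul_mul_self]
    · nth_rw 1 [← hid]; rw [cfc_mul_cfc]
    · nth_rw 2 [← hid]; simp only [cfc_mul_cfc]
      congr 1; funext x; simpa [mul_assoc] using mul_inv_mul_cancel x⁻¹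
  have hPP : (C * Q)ᴴ * (C * Q) = R * Q := by
    rw [conjTranspose_mul, hQ, Matrix.mul_assoc, ← Matrix.mul_assoc Cᴴ, ← hRC,
      ← Matrix.mul_assoc, hQRR]
  refine ⟨C * Q, ?_, ⟨?_, isHermitian_mul_conjTranspose_self _⟩, ?_⟩
  · rw [hPP, hRQ]
    exact isStarProjection_cfc (fun x => by rw [← mul_assoc, mul_inv_mul_cancel]) R
  · rw [IsIdempotentElem, Matrix.mul_assoc, ← Matrix.mul_assoc _ (C * Q), hPP, ← Matrix.mul_assoc,
      Matrix.mul_assoc C Q, hQRQ]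
  · rw [conjTranspose_mul, hQ, Matrix.mul_assoc, ← hRC, hQRR]

end RCLike

variable {n : Type*} [Fintype n] [DecidableEq n]

lemma trace_conjTranspose_mul_mul_le {A B P : Matrix n n ℝ} (hA : A.PosSemidef)
    (hB : B.PosSemidef) (hP : Pᴴ * P ≤ 1) (hP' : P * Pᴴ ≤ 1) :
    trace (Pᴴ * (B * A)) ≤ trace ((A + B) * (A + B)) / 4 := by
  have h1 := (hB.conjTranspose_mul_mul_same (1 - P)).trace_mul_nonneg hA
  have h2 := (posSemidef_conjTranspose_mul_self (B * P - P * A)).trace_nonneg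
  have h3 := (le_iff.mp hP).trace_mul_nonneg (posSemidef_conjTranspose_mul_self A)
  have h4 := (le_iff.mp hP').trace_mul_nonneg (posSemidef_conjTranspose_mul_self B)
  have e1 : trace (B * (P * A)) = trace (Pᴴ * (B * A)) := by
    rw [← trace_transpose, transpose_mul, transpose_mul, ← conjTranspose_eq_transpose_of_trivial,
      ← conjTranspose_eq_transpose_of_trivial, ← conjTranspose_eq_transpose_of_trivial, hA.1.eq,
      hB.1.eq, Matrix.mul_assoc, trace_mul_comm, Matrix.mul_assoc]
  simp only [conjTranspose_sub, conjTranspose_mul, conjTranspose_one, hA.1.eq, hB.1.eq,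
    Matrix.sub_mul, Matrix.mul_sub, Matrix.add_mul, Matrix.mul_add, Matrix.one_mul, Matrix.mul_one,
    Matrix.mul_assoc, trace_sub, trace_add] at h1 h2 h3 h4 ⊢
  have e2 : trace (A * (Pᴴ * (B * P))) = trace (Pᴴ * (B * (P * A))) := by
    rw [trace_mul_comm]; simp only [Matrix.mul_assoc]
  have e3 : trace (Pᴴ * (B * (B * P))) = trace (P * (Pᴴ * (B * B))) := by
    rw [trace_mul_comm P]; simp only [Matrix.mul_assoc]
  have e4 : trace (A * (Pᴴ * (P * A))) = trace (Pᴴ * (P * (A * A))) := by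
    rw [trace_mul_comm]; simp only [Matrix.mul_assoc]
  linarith [trace_mul_comm A B]

end Matrix

lemma frob_sq {d : ℕ} (M : Matrix (Fin d) (Fin d) ℝ) : frob M ^ 2 = trace (Mᴴ * M) := by
  rw [frob, Real.sq_sqrt (by positivity), Finset.sum_comm]
  simp only [trace, diag, mul_apply, conjTranspose_apply, star_trivial, sq]

theorem stmt5 {d : ℕ} (S1 S2 : Matrix (Fin d) (Fin d) ℝ)
    (h1 : S1.PosSemidef) (h2 : S2.PosSemidef)
    (h12 : (h1.sqrt * S2 * h1.sqrt).PosSemidef) :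
    h12.sqrt.trace ≤ (1 / 4) * frob (h1.sqrt + h2.sqrt) ^ 2 := by
  have hA := h1.posSemidef_sqrt
  have hB := h2.posSemidef_sqrt
  have hRC : h12.sqrt * h12.sqrt = (h2.sqrt * h1.sqrt)ᴴ * (h2.sqrt * h1.sqrt) := by
    rw [h12.sqrt_mul_self, conjTranspose_mul, hA.1.eq, hB.1.eq, Matrix.mul_assoc,
      Matrix.mul_assoc, ← Matrix.mul_assoc h2.sqrt, h2.sqrt_mul_self]
  obtain ⟨P, hPP, hPP', hPC⟩ :=
    exists_isStarProjection_conjTranspose_mul_eq h12.posSemidef_sqrt.1 hRC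
  calc h12.sqrt.trace = trace (Pᴴ * (h2.sqrt * h1.sqrt)) := by rw [hPC]
    _ ≤ trace ((h1.sqrt + h2.sqrt) * (h1.sqrt + h2.sqrt)) / 4 :=
      trace_conjTranspose_mul_mul_le hA hB hPP.le_one hPP'.le_one
    _ = 1 / 4 * frob (h1.sqrt + h2.sqrt) ^ 2 := by rw [frob_sq, (hA.add hB).1.eq]; ring
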